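/- Let n be a positive natural number, t > 0 and M > 0, and write s_t = 1 - e^{-2t}. For a Borel probability measure μ on ℝⁿ, let P_t μ denote the Borel probability measure on ℝⁿ with density z ↦ ∫_{ℝⁿ} (2π s_t)^{-n/2} · exp( -‖z - e^{-t}x‖²/(2 s_t) ) dμ(x) (the Ornstein–Uhlenbeck semigroup applied to μ). Then there exists a constant S > 0, depending only on n, t and M, such that for all Borel probability measures μ and ν supported in the closed ball of radius M centered at the origin, and every coupling π of μ and ν (i.e. every Borel probability measure on ℝⁿ × ℝⁿ with first marginal μ and second marginal ν), the Kullback–Leibler divergence satisfies KL( P_t ν ‖ P_t μ ) ≤ S · ∫ ‖x - y‖ dπ(x, y). In particular KL( P_t ν ‖ P_t μ ) ≤ S · W₁(μ, ν), the infimum of ∫‖x-y‖dπ over all couplings π. -/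

import Mathlib

/-!
Couple `μ` and `ν` by `γ`. For fixed `z`, the Mehler kernel `x ↦ φ_t(z, x)` is log-Lipschitz on
the ball of radius `M`, with a constant `c(z)` growing linearly in `‖z‖`. Hence the two mixtures
`ρ = P_t ν` and `σ = P_t μ` satisfy `ρ(z) ≤ e^{2M c(z)} σ(z)` and
`ρ(z) - σ(z) ≤ A(z) c(z) e^{2M c(z)} ∫ ‖x - y‖ dγ`, where `A(z)` is a Gaussian envelope of the
kernel. The elementary inequality `ρ log (ρ / σ) ≤ (ρ / σ) (ρ - σ)` turns this into a pointwise
bound of the KL integrand by an integrable Gaussian profile in `z` times the transport cost, and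
integrating in `z` gives `S`. The Wasserstein form follows by taking the infimum over couplings.
-/
open MeasureTheory Real
open scoped BigOperators

noncomputable section

/-- Density at `z` of the Ornstein–Uhlenbeck semigroup `P_t μ` applied to a Borel
probability measure `μ` on `ℝⁿ`:
`z ↦ ∫ (2π s_t)^{-n/2} exp(-‖z - e^{-t}x‖²/(2 s_t)) dμ(x)`, `s_t = 1 - e^{-2t}`. -/
def ouDensity (n : ℕ) (t : ℝ) (μ : Measure (EuclideanSpace ℝ (Fin n)))
    (z : EuclideanSpace ℝ (Fin n)) : ℝ :=
  ∫ x, (2 * π * (1 - Real.exp (-2 * t))) ^ (-(n : ℝ) / 2) *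
    Real.exp (-‖z - Real.exp (-t) • x‖ ^ 2 / (2 * (1 - Real.exp (-2 * t)))) ∂μ

/-- Kullback–Leibler divergence `KL(P_t ν ‖ P_t μ)` between the evolved measures,
computed via their densities. -/
def ouKL (n : ℕ) (t : ℝ) (ν μ : Measure (EuclideanSpace ℝ (Fin n))) : ℝ :=
  ∫ z, ouDensity n t ν z * Real.log (ouDensity n t ν z / ouDensity n t μ z)

lemma sub_le_mul_log_div {p q : ℝ} (hp : 0 ≤ p) (hq : 0 < q) : p - q ≤ p * log (p / q) := by
  have h := mul_nonneg hq.le (InformationTheory.klFun_nonneg (div_nonneg hp hq.le))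
  rw [InformationTheory.klFun_apply] at h
  field_simp at h
  linarith

lemma mul_log_div_le {p q L B : ℝ} (hp : 0 ≤ p) (hq : 0 < q) (hpq : p ≤ exp L * q)
    (hpB : p - q ≤ B) (hB : 0 ≤ B) : p * log (p / q) ≤ exp L * B := by
  rcases hp.eq_or_lt with rfl | hp
  · simp only [zero_mul]; positivity
  calc p * log (p / q) ≤ p * (p / q - 1) :=
        mul_le_mul_of_nonneg_left (log_le_sub_one_of_pos (div_pos hp hq)) hp.le
    _ = p / q * (p - q) := by field_simp
    _ ≤ exp L * B := by
        rcases le_total p q with h | h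
        · nlinarith [div_pos hp hq, exp_pos L]
        · exact mul_le_mul ((div_le_iff₀ hq).2 hpq) hpB (by linarith) (exp_pos L).le

lemma exp_sub_one_le_mul_exp {w L : ℝ} (hw : 0 ≤ w) (hwL : w ≤ L) : exp w - 1 ≤ w * exp L := by
  have h := add_one_le_exp (-w)
  have h' : exp (-w) * exp w = 1 := by rw [← exp_add, neg_add_cancel, exp_zero]
  nlinarith [exp_le_exp.2 hwL, exp_pos w]

lemma integral_pos_of_forall_pos {α : Type*} [MeasurableSpace α] {μ : Measure α} [NeZero μ]
    {f : α → ℝ} (hf : ∀ x, 0 < f x) (hfi : Integrable f μ) : 0 < ∫ x, f x ∂μ := by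
  rw [integral_pos_iff_support_of_nonneg (fun x => (hf x).le) hfi,
    Function.support_eq_univ fun x => (hf x).ne']
  exact Measure.measure_univ_pos.2 (NeZero.ne μ)

lemma le_mul_csInf {s : Set ℝ} (hs : s.Nonempty) {S a : ℝ} (hS : 0 < S)
    (h : ∀ c ∈ s, a ≤ S * c) : a ≤ S * sInf s := by
  rw [← div_le_iff₀' hS]
  exact le_csInf hs fun c hc => (div_le_iff₀' hS).2 (h c hc)

lemma integrable_exp_neg_mul_sq_norm_add_mul_norm_add {V : Type*} [NormedAddCommGroup V]
    [InnerProductSpace ℝ V] [FiniteDimensional ℝ V] [MeasurableSpace V] [BorelSpace V]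
    {b : ℝ} (hb : 0 < b) (β κ : ℝ) :
    Integrable fun v : V => exp (-b * ‖v‖ ^ 2 + β * ‖v‖ + κ) := by
  have hgauss : Integrable fun v : V => exp (-(b / 2) * ‖v‖ ^ 2) := by
    refine (GaussianFourier.integrable_cexp_neg_mul_sq_norm_add (b := ((b / 2 : ℝ) : ℂ))
      (by simpa using hb) 0 (0 : V)).norm.congr (Filter.Eventually.of_forall fun v => ?_)
    simp only [Complex.norm_exp, zero_mul, add_zero]
    norm_cast
  -- completing the square: `-b r² + β r ≤ -(b/2) r² + β² / (2b)`
  refine (hgauss.const_mul (exp (β ^ 2 / (2 * b) + κ))).mono' (by fun_prop)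
    (Filter.Eventually.of_forall fun v => ?_)
  rw [norm_of_nonneg (exp_pos _).le, ← exp_add, exp_le_exp]
  have h := sq_nonneg (b * ‖v‖ - β)
  have : (b * ‖v‖ - β) ^ 2 / (2 * b) = b / 2 * ‖v‖ ^ 2 - β * ‖v‖ + β ^ 2 / (2 * b) := by
    field_simp; ring
  nlinarith [div_nonneg h (by positivity : (0 : ℝ) ≤ 2 * b)]

theorem mul_log_integral_div_le_of_coupling {X : Type*} [MeasurableSpace X]
    {μ ν : Measure X} [NeZero μ] {γ : Measure (X × X)}
    (hγ₁ : γ.map Prod.fst = μ) (hγ₂ : γ.map Prod.snd = ν) {f : X → ℝ} {w : X × X → ℝ} {A L : ℝ}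
    (hf_pos : ∀ x, 0 < f x) (hfμ : Integrable f μ) (hfν : Integrable f ν) (hw : Integrable w γ)
    (hfA : ∀ᵐ p ∂γ, f p.1 ≤ A) (hw_nonneg : ∀ᵐ p ∂γ, 0 ≤ w p) (hwL : ∀ᵐ p ∂γ, w p ≤ L)
    (hfw : ∀ᵐ p ∂γ, f p.2 ≤ f p.1 * exp (w p)) :
    (∫ x, f x ∂ν) * log ((∫ x, f x ∂ν) / ∫ x, f x ∂μ) ≤ A * exp (2 * L) * ∫ p, w p ∂γ := by
  have : NeZero γ := ⟨fun h => NeZero.ne μ (by rw [← hγ₁, h, Measure.map_zero])⟩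
  subst hγ₁ hγ₂
  have hf₁ : Integrable (fun p => f p.1) γ :=
    (integrable_map_measure hfμ.aestronglyMeasurable measurable_fst.aemeasurable).1 hfμ
  have hf₂ : Integrable (fun p => f p.2) γ :=
    (integrable_map_measure hfν.aestronglyMeasurable measurable_snd.aemeasurable).1 hfν
  rw [integral_map measurable_fst.aemeasurable hfμ.aestronglyMeasurable,
    integral_map measurable_snd.aemeasurable hfν.aestronglyMeasurable]
  have hA : 0 ≤ A := by
    obtain ⟨p, hp⟩ := hfA.exists
    exact (hf_pos p.1).le.trans hp
  have h_ratio : ∫ p, f p.2 ∂γ ≤ exp L * ∫ p, f p.1 ∂γ := by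
    rw [← integral_const_mul]
    refine integral_mono_ae hf₂ (hf₁.const_mul _) ?_
    filter_upwards [hwL, hfw] with p hwLp hfwp
    calc f p.2 ≤ f p.1 * exp (w p) := hfwp
      _ ≤ f p.1 * exp L := by gcongr; exact (hf_pos _).le
      _ = exp L * f p.1 := mul_comm _ _
  have h_diff : ∫ p, f p.2 ∂γ - ∫ p, f p.1 ∂γ ≤ A * exp L * ∫ p, w p ∂γ := by
    rw [← integral_sub hf₂ hf₁, ← integral_const_mul]
    refine integral_mono_ae (hf₂.sub hf₁) (hw.const_mul _) ?_
    filter_upwards [hfA, hw_nonneg, hwL, hfw] with p hfAp hw0 hwLp hfwp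
    calc f p.2 - f p.1 ≤ f p.1 * (exp (w p) - 1) := by linarith
      _ ≤ A * (w p * exp L) :=
          mul_le_mul hfAp (exp_sub_one_le_mul_exp hw0 hwLp) (by linarith [add_one_le_exp (w p)])
            hA
      _ = A * exp L * w p := by ring
  calc (∫ p, f p.2 ∂γ) * log ((∫ p, f p.2 ∂γ) / ∫ p, f p.1 ∂γ)
      ≤ exp L * (A * exp L * ∫ p, w p ∂γ) :=
        mul_log_div_le (integral_nonneg fun p => (hf_pos p.2).le)
          (integral_pos_of_forall_pos (fun p => hf_pos p.1) hf₁) h_ratio h_diff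
          (mul_nonneg (by positivity) (integral_nonneg_of_ae hw_nonneg))
    _ = A * exp (2 * L) * ∫ p, w p ∂γ := by rw [two_mul, exp_add]; ring

section NormBounds

variable {E : Type*} [SeminormedAddCommGroup E] [NormedSpace ℝ E] {a M : ℝ} {x y : E}

lemma norm_sub_smul_le (ha : 0 ≤ a) (hx : ‖x‖ ≤ M) (z : E) : ‖z - a • x‖ ≤ ‖z‖ + a * M :=
  calc ‖z - a • x‖ ≤ ‖z‖ + ‖a • x‖ := norm_sub_le _ _
    _ = ‖z‖ + a * ‖x‖ := by rw [norm_smul, norm_of_nonneg ha]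
    _ ≤ ‖z‖ + a * M := by gcongr

lemma sq_norm_sub_smul_le_sq_norm_sub_smul_add (ha : 0 ≤ a) (hx : ‖x‖ ≤ M) (hy : ‖y‖ ≤ M)
    (z : E) : ‖z - a • x‖ ^ 2 ≤ ‖z - a • y‖ ^ 2 + 2 * a * (‖z‖ + a * M) * ‖x - y‖ := by
  have huv : ‖z - a • x‖ - ‖z - a • y‖ ≤ a * ‖x - y‖ :=
    calc ‖z - a • x‖ - ‖z - a • y‖ ≤ ‖(z - a • x) - (z - a • y)‖ := norm_sub_norm_le _ _
      _ = a * ‖x - y‖ := by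
        rw [sub_sub_sub_cancel_left, ← smul_sub, norm_smul, norm_sub_rev, norm_of_nonneg ha]
  have hR : ‖z - a • x‖ + ‖z - a • y‖ ≤ 2 * (‖z‖ + a * M) := by
    linarith [norm_sub_smul_le ha hx z, norm_sub_smul_le ha hy z]
  have hM : 0 ≤ M := (norm_nonneg x).trans hx
  have hax : 0 ≤ a * ‖x - y‖ := by positivity
  rcases le_total ‖z - a • x‖ ‖z - a • y‖ with h | h
  · nlinarith [norm_nonneg (z - a • x), norm_nonneg (z - a • y)]
  · nlinarith [mul_le_mul hR huv (sub_nonneg.2 h) (by positivity)]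

lemma sq_norm_sub_two_mul_le_sq_norm_sub_smul (ha : 0 ≤ a) (hx : ‖x‖ ≤ M) (z : E) :
    ‖z‖ ^ 2 - 2 * (a * M) * ‖z‖ ≤ ‖z - a • x‖ ^ 2 := by
  have h : ‖z‖ - a * M ≤ ‖z - a • x‖ :=
    calc ‖z‖ - a * M ≤ ‖z‖ - ‖a • x‖ := by
          rw [norm_smul, norm_of_nonneg ha]; gcongr
      _ ≤ ‖z - a • x‖ := norm_sub_norm_le _ _
  rcases le_total ‖z‖ (a * M) with hz | hz
  · nlinarith [norm_nonneg z, sq_nonneg ‖z - a • x‖]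
  · nlinarith [pow_le_pow_left₀ (sub_nonneg.2 hz) h 2, sq_nonneg (a * M)]

end NormBounds

def ouVariance (t : ℝ) : ℝ := 1 - exp (-2 * t)

def mehlerCoeff (n : ℕ) (t : ℝ) : ℝ := (2 * π * ouVariance t) ^ (-(n : ℝ) / 2)

def mehlerKernel (n : ℕ) (t : ℝ) (z x : EuclideanSpace ℝ (Fin n)) : ℝ :=
  mehlerCoeff n t * exp (-‖z - exp (-t) • x‖ ^ 2 / (2 * ouVariance t))

def mehlerLogLipConst (t M r : ℝ) : ℝ := exp (-t) * (r + exp (-t) * M) / ouVariance t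

def mehlerEnvelope (n : ℕ) (t M : ℝ) (z : EuclideanSpace ℝ (Fin n)) : ℝ :=
  mehlerCoeff n t * exp ((exp (-t) * M * ‖z‖ - ‖z‖ ^ 2 / 2) / ouVariance t)

-- With `c = mehlerLogLipConst t M ‖z‖`: `exp (4 M c)` is `exp (2 L)` for `L = 2 M c`, the bound
-- of `c ‖x - y‖` on the ball, and the extra `exp c` absorbs the linear factor `c ≤ exp c`.
def ouEntropyCostDensity (n : ℕ) (t M : ℝ) (z : EuclideanSpace ℝ (Fin n)) : ℝ :=
  mehlerEnvelope n t M z * exp ((4 * M + 1) * mehlerLogLipConst t M ‖z‖)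

section OrnsteinUhlenbeck

variable {n : ℕ} {t M : ℝ}

lemma ouDensity_eq_integral_mehlerKernel (μ : Measure (EuclideanSpace ℝ (Fin n)))
    (z : EuclideanSpace ℝ (Fin n)) : ouDensity n t μ z = ∫ x, mehlerKernel n t z x ∂μ := rfl

lemma ouVariance_pos (ht : 0 < t) : 0 < ouVariance t := by
  rw [ouVariance, sub_pos, exp_lt_one_iff]
  linarith

lemma mehlerCoeff_pos (ht : 0 < t) : 0 < mehlerCoeff n t :=
  rpow_pos_of_pos (by have := ouVariance_pos ht; positivity) _

lemma mehlerKernel_pos (ht : 0 < t) (z x : EuclideanSpace ℝ (Fin n)) : 0 < mehlerKernel n t z x :=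
  mul_pos (mehlerCoeff_pos ht) (exp_pos _)

lemma mehlerKernel_le_mehlerCoeff (ht : 0 < t) (z x : EuclideanSpace ℝ (Fin n)) :
    mehlerKernel n t z x ≤ mehlerCoeff n t := by
  have := ouVariance_pos ht
  refine mul_le_of_le_one_right (mehlerCoeff_pos ht).le (exp_le_one_iff.2 ?_)
  exact div_nonpos_of_nonpos_of_nonneg (neg_nonpos.2 (sq_nonneg _)) (by positivity)

lemma continuous_mehlerKernel_left (x : EuclideanSpace ℝ (Fin n)) :
    Continuous fun z => mehlerKernel n t z x := by
  unfold mehlerKernel; fun_prop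

lemma continuous_mehlerKernel_right (z : EuclideanSpace ℝ (Fin n)) :
    Continuous (mehlerKernel n t z) := by
  unfold mehlerKernel; fun_prop

lemma integrable_mehlerKernel (ht : 0 < t) (μ : Measure (EuclideanSpace ℝ (Fin n)))
    [IsFiniteMeasure μ] (z : EuclideanSpace ℝ (Fin n)) : Integrable (mehlerKernel n t z) μ :=
  .of_bound (continuous_mehlerKernel_right z).aestronglyMeasurable (mehlerCoeff n t)
    (.of_forall fun x => by
      rw [norm_of_nonneg (mehlerKernel_pos ht z x).le]; exact mehlerKernel_le_mehlerCoeff ht z x)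

lemma continuous_ouDensity (ht : 0 < t) (μ : Measure (EuclideanSpace ℝ (Fin n)))
    [IsFiniteMeasure μ] : Continuous (ouDensity n t μ) :=
  show Continuous fun z => ∫ x, mehlerKernel n t z x ∂μ from
  continuous_of_dominated (fun z => (continuous_mehlerKernel_right z).aestronglyMeasurable)
    (fun z => .of_forall fun x => by
      rw [norm_of_nonneg (mehlerKernel_pos ht z x).le]; exact mehlerKernel_le_mehlerCoeff ht z x)
    (integrable_const _) (.of_forall continuous_mehlerKernel_left)

lemma mehlerLogLipConst_nonneg (ht : 0 < t) (hM : 0 ≤ M) {r : ℝ} (hr : 0 ≤ r) :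
    0 ≤ mehlerLogLipConst t M r := by
  have := ouVariance_pos ht
  unfold mehlerLogLipConst; positivity

lemma mehlerKernel_le_mul_exp (ht : 0 < t) {x y : EuclideanSpace ℝ (Fin n)} (hx : ‖x‖ ≤ M)
    (hy : ‖y‖ ≤ M) (z : EuclideanSpace ℝ (Fin n)) :
    mehlerKernel n t z y ≤ mehlerKernel n t z x * exp (mehlerLogLipConst t M ‖z‖ * ‖x - y‖) := by
  have hs := ouVariance_pos ht
  have key := sq_norm_sub_smul_le_sq_norm_sub_smul_add (exp_pos (-t)).le hx hy z
  unfold mehlerKernel mehlerLogLipConst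
  rw [mul_assoc, ← exp_add]
  gcongr ?_ * exp ?_
  · exact (mehlerCoeff_pos ht).le
  · rw [show -‖z - exp (-t) • x‖ ^ 2 / (2 * ouVariance t) +
        exp (-t) * (‖z‖ + exp (-t) * M) / ouVariance t * ‖x - y‖ =
        (-‖z - exp (-t) • x‖ ^ 2 + 2 * exp (-t) * (‖z‖ + exp (-t) * M) * ‖x - y‖) /
          (2 * ouVariance t) by field_simp]
    gcongr
    linarith

lemma mehlerKernel_le_mehlerEnvelope (ht : 0 < t) {x : EuclideanSpace ℝ (Fin n)} (hx : ‖x‖ ≤ M)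
    (z : EuclideanSpace ℝ (Fin n)) : mehlerKernel n t z x ≤ mehlerEnvelope n t M z := by
  have hs := ouVariance_pos ht
  have key := sq_norm_sub_two_mul_le_sq_norm_sub_smul (exp_pos (-t)).le hx z
  unfold mehlerKernel mehlerEnvelope
  gcongr ?_ * exp ?_
  · exact (mehlerCoeff_pos ht).le
  · rw [show (exp (-t) * M * ‖z‖ - ‖z‖ ^ 2 / 2) / ouVariance t =
        -(‖z‖ ^ 2 - 2 * (exp (-t) * M) * ‖z‖) / (2 * ouVariance t) by field_simp; ring]
    gcongr

lemma mehlerEnvelope_pos (ht : 0 < t) (z : EuclideanSpace ℝ (Fin n)) :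
    0 < mehlerEnvelope n t M z :=
  mul_pos (mehlerCoeff_pos ht) (exp_pos _)

lemma mehlerEnvelope_le_ouEntropyCostDensity (ht : 0 < t) (hM : 0 ≤ M)
    (z : EuclideanSpace ℝ (Fin n)) : mehlerEnvelope n t M z ≤ ouEntropyCostDensity n t M z := by
  have := mehlerLogLipConst_nonneg ht hM (norm_nonneg z)
  exact le_mul_of_one_le_right (mehlerEnvelope_pos ht z).le (one_le_exp (by positivity))

lemma ouEntropyCostDensity_pos (ht : 0 < t) (z : EuclideanSpace ℝ (Fin n)) :
    0 < ouEntropyCostDensity n t M z :=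
  mul_pos (mehlerEnvelope_pos ht z) (exp_pos _)

lemma integrable_ouEntropyCostDensity (ht : 0 < t) :
    Integrable (ouEntropyCostDensity n t M) := by
  have hs := ouVariance_pos ht
  have h_eq : ouEntropyCostDensity n t M = fun z => mehlerCoeff n t *
      exp (-(1 / (2 * ouVariance t)) * ‖z‖ ^ 2 +
        (exp (-t) * M + (4 * M + 1) * exp (-t)) / ouVariance t * ‖z‖ +
        (4 * M + 1) * exp (-t) * (exp (-t) * M) / ouVariance t) := by
    ext z
    unfold ouEntropyCostDensity mehlerEnvelope mehlerLogLipConst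
    rw [mul_assoc, ← exp_add]
    congr 2
    field_simp
    ring
  rw [h_eq]
  exact (integrable_exp_neg_mul_sq_norm_add_mul_norm_add (by positivity) _ _).const_mul _

lemma ae_norm_le_of_measure_compl_closedBall_eq_zero {μ : Measure (EuclideanSpace ℝ (Fin n))}
    (hμ : μ (Metric.closedBall 0 M)ᶜ = 0) : ∀ᵐ x ∂μ, ‖x‖ ≤ M := by
  filter_upwards [mem_ae_iff.2 hμ] with x hx using mem_closedBall_zero_iff.1 hx

variable {μ ν : Measure (EuclideanSpace ℝ (Fin n))} [IsProbabilityMeasure μ]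

lemma nonneg_of_measure_compl_closedBall_eq_zero (hμ : μ (Metric.closedBall 0 M)ᶜ = 0) :
    0 ≤ M := by
  obtain ⟨x, hx⟩ := (ae_norm_le_of_measure_compl_closedBall_eq_zero hμ).exists
  exact (norm_nonneg x).trans hx

lemma neg_mehlerEnvelope_le_mul_log_ouDensity_div (ht : 0 < t)
    (hμ : μ (Metric.closedBall 0 M)ᶜ = 0) (z : EuclideanSpace ℝ (Fin n)) :
    -mehlerEnvelope n t M z ≤ ouDensity n t ν z * log (ouDensity n t ν z / ouDensity n t μ z) := by
  have hσ_le : ouDensity n t μ z ≤ mehlerEnvelope n t M z :=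
    calc ouDensity n t μ z ≤ ∫ _, mehlerEnvelope n t M z ∂μ := by
          refine integral_mono_ae (integrable_mehlerKernel ht μ z) (integrable_const _) ?_
          filter_upwards [ae_norm_le_of_measure_compl_closedBall_eq_zero hμ] with x hx
            using mehlerKernel_le_mehlerEnvelope ht hx z
      _ = mehlerEnvelope n t M z := by simp
  have hρ : 0 ≤ ouDensity n t ν z := integral_nonneg fun x => (mehlerKernel_pos ht z x).le
  have hσ : 0 < ouDensity n t μ z :=
    integral_pos_of_forall_pos (mehlerKernel_pos ht z) (integrable_mehlerKernel ht μ z)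
  linarith [sub_le_mul_log_div hρ hσ]

lemma mul_log_ouDensity_div_le [IsProbabilityMeasure ν] (ht : 0 < t)
    (hμ : μ (Metric.closedBall 0 M)ᶜ = 0) (hν : ν (Metric.closedBall 0 M)ᶜ = 0)
    {γ : Measure (EuclideanSpace ℝ (Fin n) × EuclideanSpace ℝ (Fin n))} [IsFiniteMeasure γ]
    (hγ₁ : γ.map Prod.fst = μ) (hγ₂ : γ.map Prod.snd = ν) (z : EuclideanSpace ℝ (Fin n)) :
    ouDensity n t ν z * log (ouDensity n t ν z / ouDensity n t μ z) ≤
      ouEntropyCostDensity n t M z * ∫ p, ‖p.1 - p.2‖ ∂γ := by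
  have hball : ∀ᵐ p ∂γ, ‖p.1‖ ≤ M ∧ ‖p.2‖ ≤ M := by
    have h₁ := ae_of_ae_map measurable_fst.aemeasurable
      (hγ₁ ▸ ae_norm_le_of_measure_compl_closedBall_eq_zero hμ)
    have h₂ := ae_of_ae_map measurable_snd.aemeasurable
      (hγ₂ ▸ ae_norm_le_of_measure_compl_closedBall_eq_zero hν)
    exact h₁.and h₂
  have hM := nonneg_of_measure_compl_closedBall_eq_zero hμ
  have hdist : ∀ᵐ p ∂γ, ‖p.1 - p.2‖ ≤ 2 * M := by
    filter_upwards [hball] with p hp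
    linarith [norm_sub_le p.1 p.2]
  have hI : Integrable (fun p => ‖p.1 - p.2‖) γ :=
    .of_bound (by fun_prop) (2 * M) (by filter_upwards [hdist] with p hp; rwa [norm_norm])
  set c := mehlerLogLipConst t M ‖z‖ with hc_def
  have hc : 0 ≤ c := mehlerLogLipConst_nonneg ht hM (norm_nonneg z)
  have hmix := mul_log_integral_div_le_of_coupling hγ₁ hγ₂ (mehlerKernel_pos ht z)
    (integrable_mehlerKernel ht μ z) (integrable_mehlerKernel ht ν z)
    (w := fun p => c * ‖p.1 - p.2‖) (hI.const_mul c)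
    (by filter_upwards [hball] with p hp using mehlerKernel_le_mehlerEnvelope ht hp.1 z)
    (.of_forall fun p => mul_nonneg hc (norm_nonneg _))
    (by filter_upwards [hdist] with p hp using mul_le_mul_of_nonneg_left hp hc)
    (by filter_upwards [hball] with p hp using mehlerKernel_le_mul_exp ht hp.1 hp.2 z)
  have hE₀ := (mehlerEnvelope_pos ht (M := M) z).le
  calc _ ≤ mehlerEnvelope n t M z * exp (2 * (c * (2 * M))) * ∫ p, c * ‖p.1 - p.2‖ ∂γ := hmix
    _ = mehlerEnvelope n t M z * exp (2 * (c * (2 * M))) * c * ∫ p, ‖p.1 - p.2‖ ∂γ := by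
        rw [integral_const_mul]; ring
    _ ≤ mehlerEnvelope n t M z * exp (2 * (c * (2 * M))) * exp c * ∫ p, ‖p.1 - p.2‖ ∂γ := by
        have hI₀ : 0 ≤ ∫ p, ‖p.1 - p.2‖ ∂γ := integral_nonneg fun p => norm_nonneg (p.1 - p.2)
        gcongr
        linarith [add_one_le_exp c]
    _ = ouEntropyCostDensity n t M z * ∫ p, ‖p.1 - p.2‖ ∂γ := by
        rw [ouEntropyCostDensity, ← hc_def, mul_assoc (mehlerEnvelope n t M z), ← exp_add]
        ring_nf

theorem ouKL_le_integral_mul_integral_norm_sub [IsProbabilityMeasure ν] (ht : 0 < t)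
    (hμ : μ (Metric.closedBall 0 M)ᶜ = 0) (hν : ν (Metric.closedBall 0 M)ᶜ = 0)
    {γ : Measure (EuclideanSpace ℝ (Fin n) × EuclideanSpace ℝ (Fin n))} [IsFiniteMeasure γ]
    (hγ₁ : γ.map Prod.fst = μ) (hγ₂ : γ.map Prod.snd = ν) :
    ouKL n t ν μ ≤ (∫ z, ouEntropyCostDensity n t M z) * ∫ p, ‖p.1 - p.2‖ ∂γ := by
  set I := ∫ p, ‖p.1 - p.2‖ ∂γ
  have hM := nonneg_of_measure_compl_closedBall_eq_zero hμ
  have hI : 0 ≤ I := integral_nonneg fun p => norm_nonneg (p.1 - p.2)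
  have hΦ := integrable_ouEntropyCostDensity (n := n) (M := M) ht
  have h_upper := mul_log_ouDensity_div_le ht hμ hν hγ₁ hγ₂
  have h_lower z := (neg_mehlerEnvelope_le_mul_log_ouDensity_div (ν := ν) ht hμ z).trans'
    (neg_le_neg (mehlerEnvelope_le_ouEntropyCostDensity ht hM z))
  have h_meas : AEStronglyMeasurable
      (fun z => ouDensity n t ν z * log (ouDensity n t ν z / ouDensity n t μ z)) := by
    have hρ := (continuous_ouDensity ht ν).measurable
    have hσ := (continuous_ouDensity ht μ).measurable
    exact (hρ.mul (hρ.div hσ).log).aestronglyMeasurable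
  have h_int : Integrable
      (fun z => ouDensity n t ν z * log (ouDensity n t ν z / ouDensity n t μ z)) :=
    (hΦ.mul_const (I + 1)).mono' h_meas (.of_forall fun z => by
      rw [norm_eq_abs, abs_le]
      constructor <;> nlinarith [h_upper z, h_lower z, ouEntropyCostDensity_pos (M := M) ht z])
  calc ouKL n t ν μ ≤ ∫ z, ouEntropyCostDensity n t M z * I :=
        integral_mono h_int (hΦ.mul_const I) h_upper
    _ = (∫ z, ouEntropyCostDensity n t M z) * I := integral_mul_const I _

end OrnsteinUhlenbeck

theorem ou_entropy_cost_inequality_general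
    (n : ℕ) (t M : ℝ) (ht : 0 < t) :
    ∃ S : ℝ, 0 < S ∧
      ∀ μ ν : Measure (EuclideanSpace ℝ (Fin n)),
        IsProbabilityMeasure μ → IsProbabilityMeasure ν →
        μ (Metric.closedBall (0 : EuclideanSpace ℝ (Fin n)) M)ᶜ = 0 →
        ν (Metric.closedBall (0 : EuclideanSpace ℝ (Fin n)) M)ᶜ = 0 →
        (∀ γ : Measure (EuclideanSpace ℝ (Fin n) × EuclideanSpace ℝ (Fin n)),
          IsProbabilityMeasure γ → γ.map Prod.fst = μ → γ.map Prod.snd = ν →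
            ouKL n t ν μ ≤ S * ∫ p, ‖p.1 - p.2‖ ∂γ) ∧
        ouKL n t ν μ ≤ S * sInf {c : ℝ |
          ∃ γ : Measure (EuclideanSpace ℝ (Fin n) × EuclideanSpace ℝ (Fin n)),
            IsProbabilityMeasure γ ∧ γ.map Prod.fst = μ ∧ γ.map Prod.snd = ν ∧
            c = ∫ p, ‖p.1 - p.2‖ ∂γ} := by
  have hS := integral_pos_of_forall_pos (ouEntropyCostDensity_pos (n := n) (M := M) ht)
    (integrable_ouEntropyCostDensity ht)
  refine ⟨_, hS, fun μ ν _ _ hμ hν => ?_⟩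
  have h_coupling : ∀ γ : Measure (EuclideanSpace ℝ (Fin n) × EuclideanSpace ℝ (Fin n)),
      IsProbabilityMeasure γ → γ.map Prod.fst = μ → γ.map Prod.snd = ν →
        ouKL n t ν μ ≤ (∫ z, ouEntropyCostDensity n t M z) * ∫ p, ‖p.1 - p.2‖ ∂γ :=
    fun γ _ hγ₁ hγ₂ => ouKL_le_integral_mul_integral_norm_sub ht hμ hν hγ₁ hγ₂
  refine ⟨h_coupling, le_mul_csInf ?_ hS ?_⟩
  · exact ⟨_, μ.prod ν, inferInstance, by simp, by simp, rfl⟩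
  · rintro _ ⟨γ, hγ, hγ₁, hγ₂, rfl⟩
    exact h_coupling γ hγ hγ₁ hγ₂

/-- entropy–cost inequality (paper's Theorem 14). For the OU semigroup
there is a constant `S > 0` (depending only on `n`, `t`, `M`) such that for all Borel
probability measures `μ, ν` supported in the closed ball of radius `M` and every
coupling `γ` of `μ` and `ν`, `KL(P_t ν ‖ P_t μ) ≤ S ∫ ‖x - y‖ dγ`; in particular
`KL(P_t ν ‖ P_t μ) ≤ S · W₁(μ, ν)`. -/
theorem ou_entropy_cost_inequality
    (n : ℕ) (hn : 0 < n) (t M : ℝ) (ht : 0 < t) (hM : 0 < M) :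
    ∃ S : ℝ, 0 < S ∧
      ∀ μ ν : Measure (EuclideanSpace ℝ (Fin n)),
        IsProbabilityMeasure μ → IsProbabilityMeasure ν →
        μ (Metric.closedBall (0 : EuclideanSpace ℝ (Fin n)) M)ᶜ = 0 →
        ν (Metric.closedBall (0 : EuclideanSpace ℝ (Fin n)) M)ᶜ = 0 →
        (∀ γ : Measure (EuclideanSpace ℝ (Fin n) × EuclideanSpace ℝ (Fin n)),
          IsProbabilityMeasure γ → γ.map Prod.fst = μ → γ.map Prod.snd = ν →
            ouKL n t ν μ ≤ S * ∫ p, ‖p.1 - p.2‖ ∂γ) ∧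
        ouKL n t ν μ ≤ S * sInf {c : ℝ |
          ∃ γ : Measure (EuclideanSpace ℝ (Fin n) × EuclideanSpace ℝ (Fin n)),
            IsProbabilityMeasure γ ∧ γ.map Prod.fst = μ ∧ γ.map Prod.snd = ν ∧
            c = ∫ p, ‖p.1 - p.2‖ ∂γ} :=
  ou_entropy_cost_inequality_general n t M ht
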